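/- Under the alternative assumption τ̃ := ‖a0⁻¹ Σ_{m=1}^∞ |a_m|‖_∞ < 1, with τ̃_r := ‖a0⁻¹ Σ_{m=1}^r |a_m|‖_∞, there holds a.e. in Ω × Γ: ((1−τ̃_r)/(1+τ̃)) a(x,y) ≤ a_r(x,y) ≤ ((1+τ̃_r)/(1−τ̃)) a(x,y), and consequently the generalized eigenvalues of the pair of Gram matrices (A, P_r) lie in [(1−τ̃)/(1+τ̃_r), (1+τ̃)/(1−τ̃_r)]. -/

import Mathlib

open MeasureTheory Matrix
open scoped InnerProductSpace

/-!
A perturbation `a0 + s` with `|s| ≤ σ a0` lies between `(1 - σ) a0` and `(1 + σ) a0`, so two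
such perturbations (here `a` and `a_r`, with `σ = τ̃` and `σ = τ̃_r`) are comparable pointwise.
Multiplying the pointwise bounds by `p · ‖Σ_t v_t W_t‖² ≥ 0` and integrating compares the
quadratic forms `v ⬝ᵥ A v` and `v ⬝ᵥ P_r v`; for a generalized eigenpair their ratio is the
eigenvalue, and `v ⬝ᵥ P_r v > 0`.
-/

lemma abs_tsum_mul_le_tsum_abs {ι : Type*} {b y : ι → ℝ} (hb : Summable fun m => |b m|)
    (hy : ∀ m, |y m| ≤ 1) : |∑' m, b m * y m| ≤ ∑' m, |b m| := by
  have hle : ∀ m, ‖b m * y m‖ ≤ |b m| := fun m => by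
    rw [Real.norm_eq_abs, abs_mul]
    exact mul_le_of_le_one_right (abs_nonneg _) (hy m)
  calc |∑' m, b m * y m| ≤ ∑' m, ‖b m * y m‖ :=
        norm_tsum_le_tsum_norm (hb.of_nonneg_of_le (fun _ => norm_nonneg _) hle)
    _ ≤ ∑' m, |b m| := (hb.of_nonneg_of_le (fun _ => norm_nonneg _) hle).tsum_le_tsum hle hb

lemma abs_sum_mul_le_sum_abs {ι : Type*} (s : Finset ι) {b y : ι → ℝ}
    (hy : ∀ m, |y m| ≤ 1) : |∑ m ∈ s, b m * y m| ≤ ∑ m ∈ s, |b m| := by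
  refine (Finset.abs_sum_le_sum_abs _ _).trans (Finset.sum_le_sum fun m _ => ?_)
  rw [abs_mul]
  exact mul_le_of_le_one_right (abs_nonneg _) (hy m)

lemma perturbation_ratio_bounds {a s s' σ σ' : ℝ} (hs : |s| ≤ σ * a) (hs' : |s'| ≤ σ' * a)
    (hσ₀ : 0 ≤ σ) (hσ₁ : σ < 1) (hσ'₀ : 0 ≤ σ') (hσ'₁ : σ' ≤ 1) :
    (1 - σ') / (1 + σ) * (a + s) ≤ a + s' ∧ a + s' ≤ (1 + σ') / (1 - σ) * (a + s) := by
  obtain ⟨hs₁, hs₂⟩ := abs_le.mp hs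
  obtain ⟨hs'₁, hs'₂⟩ := abs_le.mp hs'
  constructor
  · rw [div_mul_eq_mul_div, div_le_iff₀ (by linarith)]
    nlinarith
  · rw [div_mul_eq_mul_div, le_div_iff₀ (by linarith)]
    nlinarith

section Gram

variable {α ι E : Type*} [MeasurableSpace α] [Fintype ι]
  [NormedAddCommGroup E] [InnerProductSpace ℝ E]

noncomputable def weightedGram (π : Measure α) (c : α → ℝ) (W : ι → α → E) : Matrix ι ι ℝ :=
  fun t s => ∫ z, c z * ⟪W s z, W t z⟫_ℝ ∂π

lemma sum_sum_mul_inner_eq_norm_sq (v : ι → ℝ) (w : ι → E) :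
    ∑ t, ∑ s, v t * v s * ⟪w s, w t⟫_ℝ = ‖∑ t, v t • w t‖ ^ 2 := by
  rw [← real_inner_self_eq_norm_sq, inner_sum]
  refine Finset.sum_congr rfl fun t _ => ?_
  rw [real_inner_smul_right, sum_inner, Finset.mul_sum]
  refine Finset.sum_congr rfl fun s _ => ?_
  rw [real_inner_smul_left]
  ring

lemma integrable_and_dotProduct_mulVec_weightedGram {π : Measure α} {c : α → ℝ}
    {W : ι → α → E} (hI : ∀ t s, Integrable (fun z => c z * ⟪W s z, W t z⟫_ℝ) π)
    (v : ι → ℝ) :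
    Integrable (fun z => c z * ‖∑ t, v t • W t z‖ ^ 2) π ∧
      v ⬝ᵥ weightedGram π c W *ᵥ v = ∫ z, c z * ‖∑ t, v t • W t z‖ ^ 2 ∂π := by
  have hpt : ∀ z, ∑ t, ∑ s, v t * v s * (c z * ⟪W s z, W t z⟫_ℝ) =
      c z * ‖∑ t, v t • W t z‖ ^ 2 := fun z => by
    rw [← sum_sum_mul_inner_eq_norm_sq, Finset.mul_sum]
    refine Finset.sum_congr rfl fun t _ => ?_
    rw [Finset.mul_sum]
    exact Finset.sum_congr rfl fun s _ => by ring
  have hI' : ∀ t s, Integrable (fun z => v t * v s * (c z * ⟪W s z, W t z⟫_ℝ)) π :=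
    fun t s => (hI t s).const_mul _
  have hIsum : ∀ t, Integrable (fun z => ∑ s, v t * v s * (c z * ⟪W s z, W t z⟫_ℝ)) π :=
    fun t => integrable_finsetSum _ fun s _ => hI' t s
  refine ⟨(integrable_finsetSum _ fun t _ => hIsum t).congr (.of_forall hpt), ?_⟩
  calc v ⬝ᵥ weightedGram π c W *ᵥ v
      = ∑ t, ∑ s, ∫ z, v t * v s * (c z * ⟪W s z, W t z⟫_ℝ) ∂π := by
        simp only [dotProduct, mulVec, weightedGram, Finset.mul_sum, integral_const_mul]
        exact Finset.sum_congr rfl fun t _ => Finset.sum_congr rfl fun s _ => by ring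
    _ = ∫ z, c z * ‖∑ t, v t • W t z‖ ^ 2 ∂π := by
        simp only [← integral_finsetSum _ fun s _ => hI' _ s,
          ← integral_finsetSum _ fun t _ => hIsum t, hpt]

lemma dotProduct_mulVec_weightedGram_le {π : Measure α} {c c' : α → ℝ} {W : ι → α → E}
    (hI : ∀ t s, Integrable (fun z => c z * ⟪W s z, W t z⟫_ℝ) π)
    (hI' : ∀ t s, Integrable (fun z => c' z * ⟪W s z, W t z⟫_ℝ) π)
    {k k' : ℝ} (hle : ∀ᵐ z ∂π, k * c z ≤ k' * c' z) (v : ι → ℝ) :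
    k * (v ⬝ᵥ weightedGram π c W *ᵥ v) ≤ k' * (v ⬝ᵥ weightedGram π c' W *ᵥ v) := by
  obtain ⟨hq, hq_eq⟩ := integrable_and_dotProduct_mulVec_weightedGram hI v
  obtain ⟨hq', hq'_eq⟩ := integrable_and_dotProduct_mulVec_weightedGram hI' v
  rw [hq_eq, hq'_eq, ← integral_const_mul, ← integral_const_mul]
  refine integral_mono_ae (hq.const_mul k) (hq'.const_mul k') ?_
  filter_upwards [hle] with z hz
  rw [← mul_assoc, ← mul_assoc]
  exact mul_le_mul_of_nonneg_right hz (sq_nonneg _)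

end Gram

lemma truncation_ratio_bounds {b y : ℕ → ℝ} {a τ τr : ℝ} (r : ℕ)
    (hb : Summable fun m => |b m|) (hy : ∀ m, |y m| ≤ 1)
    (hτ : ∑' m, |b m| ≤ τ * a) (hτr : ∑ m ∈ Finset.range r, |b m| ≤ τr * a)
    (hτ₁ : τ < 1) (hτr₀ : 0 ≤ τr) (hτrτ : τr ≤ τ) :
    ((1 - τr) / (1 + τ) * (a + ∑' m, b m * y m) ≤ a + ∑ m ∈ Finset.range r, b m * y m ∧
      a + ∑ m ∈ Finset.range r, b m * y m ≤ (1 + τr) / (1 - τ) * (a + ∑' m, b m * y m)) ∧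
    ((1 - τ) / (1 + τr) * (a + ∑ m ∈ Finset.range r, b m * y m) ≤ a + ∑' m, b m * y m ∧
      a + ∑' m, b m * y m ≤ (1 + τ) / (1 - τr) * (a + ∑ m ∈ Finset.range r, b m * y m)) := by
  have hs := (abs_tsum_mul_le_tsum_abs hb hy).trans hτ
  have hsr := (abs_sum_mul_le_sum_abs (Finset.range r) hy).trans hτr
  have hτ₀ := hτr₀.trans hτrτ
  exact ⟨perturbation_ratio_bounds hs hsr hτ₀ hτ₁ hτr₀ (hτrτ.trans hτ₁.le),
    perturbation_ratio_bounds hsr hs hτr₀ (hτrτ.trans_lt hτ₁) hτ₀ hτ₁.le⟩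

lemma Matrix.PosDef.generalized_eigenvalue_mem_Icc {n : Type*} [Fintype n]
    {A P : Matrix n n ℝ} (hP : P.PosDef) {v : n → ℝ} (hv : v ≠ 0) {lam c₁ c₂ : ℝ}
    (heig : A *ᵥ v = lam • P *ᵥ v) (h₁ : c₁ * (v ⬝ᵥ P *ᵥ v) ≤ v ⬝ᵥ A *ᵥ v)
    (h₂ : v ⬝ᵥ A *ᵥ v ≤ c₂ * (v ⬝ᵥ P *ᵥ v)) : c₁ ≤ lam ∧ lam ≤ c₂ := by
  have hpos : 0 < v ⬝ᵥ P *ᵥ v := by simpa only [star_trivial] using hP.dotProduct_mulVec_pos hv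
  rw [heig, dotProduct_smul, smul_eq_mul] at h₁ h₂
  exact ⟨le_of_mul_le_mul_right h₁ hpos, le_of_mul_le_mul_right h₂ hpos⟩

/-- Here `b m` plays the role of `a_{m+1}`, `Y y m` is the `m`-th coordinate of
`y ∈ [-1,1]^ℕ`, and `W t` represents the spatial gradient of the `t`-th Galerkin
basis function. -/
theorem alternative_assumption_bounds_general
    {Ω Γ : Type*} [MeasurableSpace Ω] [MeasurableSpace Γ]
    (μ : Measure Ω) (ν : Measure Γ) {d N : ℕ} (r : ℕ)
    (p : Γ → ℝ) (hp : ∀ y, 0 ≤ p y)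
    (Y : Γ → ℕ → ℝ) (hY : ∀ᵐ y ∂ν, ∀ m, |Y y m| ≤ 1)
    (a0 : Ω → ℝ) (b : ℕ → Ω → ℝ) (τt τtr : ℝ)
    (hsum : ∀ x, Summable fun m => |b m x|)
    (hτt : ∀ᵐ x ∂μ, (∑' m, |b m x|) ≤ τt * a0 x)
    (hτtr : ∀ᵐ x ∂μ, (∑ m ∈ Finset.range r, |b m x|) ≤ τtr * a0 x)
    (hτt1 : τt < 1) (hτtr0 : 0 ≤ τtr) (hτtrτ : τtr ≤ τt)
    (W : Fin N → Ω × Γ → EuclideanSpace ℝ (Fin d))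
    (A Pr : Matrix (Fin N) (Fin N) ℝ)
    (hA : ∀ t s, A t s =
      ∫ z, p z.2 * ((a0 z.1 + ∑' m, b m z.1 * Y z.2 m) *
        (inner ℝ (W s z) (W t z) : ℝ)) ∂(μ.prod ν))
    (hPr : ∀ t s, Pr t s =
      ∫ z, p z.2 * ((a0 z.1 + ∑ m ∈ Finset.range r, b m z.1 * Y z.2 m) *
        (inner ℝ (W s z) (W t z) : ℝ)) ∂(μ.prod ν))
    (hIA : ∀ t s, Integrable
      (fun z => p z.2 * ((a0 z.1 + ∑' m, b m z.1 * Y z.2 m) *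
        (inner ℝ (W s z) (W t z) : ℝ))) (μ.prod ν))
    (hIr : ∀ t s, Integrable
      (fun z => p z.2 * ((a0 z.1 + ∑ m ∈ Finset.range r, b m z.1 * Y z.2 m) *
        (inner ℝ (W s z) (W t z) : ℝ))) (μ.prod ν))
    (hPrpd : Pr.PosDef) :
    (∀ y : ℕ → ℝ, (∀ m, |y m| ≤ 1) →
      ∀ᵐ x ∂μ,
        ((1 - τtr) / (1 + τt)) * (a0 x + ∑' m, b m x * y m) ≤
          a0 x + ∑ m ∈ Finset.range r, b m x * y m ∧
        a0 x + ∑ m ∈ Finset.range r, b m x * y m ≤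
          ((1 + τtr) / (1 - τt)) * (a0 x + ∑' m, b m x * y m)) ∧
    (∀ (lam : ℝ) (v : Fin N → ℝ), v ≠ 0 → A.mulVec v = lam • Pr.mulVec v →
      (1 - τt) / (1 + τtr) ≤ lam ∧ lam ≤ (1 + τt) / (1 - τtr)) := by
  refine ⟨fun y hy => ?_, fun lam v hv heig => ?_⟩
  · filter_upwards [hτt, hτtr] with x hx hxr
    exact (truncation_ratio_bounds r (hsum x) hy hx hxr hτt1 hτtr0 hτtrτ).1
  set a : Ω × Γ → ℝ := fun z => a0 z.1 + ∑' m, b m z.1 * Y z.2 m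
  set ar : Ω × Γ → ℝ := fun z => a0 z.1 + ∑ m ∈ Finset.range r, b m z.1 * Y z.2 m
  have hcoeff : ∀ᵐ z ∂μ.prod ν, (1 - τt) / (1 + τtr) * (p z.2 * ar z) ≤ p z.2 * a z ∧
      p z.2 * a z ≤ (1 + τt) / (1 - τtr) * (p z.2 * ar z) := by
    filter_upwards [Measure.quasiMeasurePreserving_fst.ae (hτt.and hτtr),
      Measure.quasiMeasurePreserving_snd.ae hY] with z ⟨hx, hxr⟩ hy
    obtain ⟨h₁, h₂⟩ := (truncation_ratio_bounds r (hsum z.1) hy hx hxr hτt1 hτtr0 hτtrτ).2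
    rw [mul_left_comm, mul_left_comm _ (p z.2)]
    exact ⟨mul_le_mul_of_nonneg_left h₁ (hp _), mul_le_mul_of_nonneg_left h₂ (hp _)⟩
  simp only [← mul_assoc] at hA hPr hIA hIr
  have hA' : A = weightedGram (μ.prod ν) _ W := Matrix.ext hA
  have hPr' : Pr = weightedGram (μ.prod ν) _ W := Matrix.ext hPr
  subst hA' hPr'
  refine hPrpd.generalized_eigenvalue_mem_Icc hv heig ?_ ?_
  · simpa only [one_mul] using dotProduct_mulVec_weightedGram_le (k' := 1) hIr hIA
      (hcoeff.mono fun _ h => by rw [one_mul]; exact h.1) v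
  · simpa only [one_mul] using dotProduct_mulVec_weightedGram_le (k := 1) hIA hIr
      (hcoeff.mono fun _ h => by rw [one_mul]; exact h.2) v

/-- Under the alternative assumption `τ̃ = ‖a0⁻¹ Σ_{m=1}^∞ |a_m|‖_∞ < 1` (expressed
via the a.e. bounds `Σ' |b m x| ≤ τt * a0 x` and `Σ_{m<r} |b m x| ≤ τtr * a0 x`),
the truncated coefficient `a_r` is equivalent to `a` pointwise a.e., and the
generalized eigenvalues of the pair of Gram matrices `(A, P_r)` lie in
`[(1−τ̃)/(1+τ̃_r), (1+τ̃)/(1−τ̃_r)]`.  Here `b m` plays the role of `a_{m+1}`,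
`Y y m` the `m`-th coordinate of `y ∈ [-1,1]^ℕ`, and `W t` represents the spatial
gradient of the `t`-th Galerkin basis function. -/
theorem alternative_assumption_bounds
    {Ω Γ : Type*} [MeasurableSpace Ω] [MeasurableSpace Γ]
    (μ : Measure Ω) (ν : Measure Γ) {d N : ℕ} (r : ℕ)
    (p : Γ → ℝ) (hp : ∀ y, 0 ≤ p y)
    (Y : Γ → ℕ → ℝ) (hY : ∀ᵐ y ∂ν, ∀ m, |Y y m| ≤ 1)
    (a0 : Ω → ℝ) (b : ℕ → Ω → ℝ) (a0min τt τtr : ℝ)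
    (ha0min : 0 < a0min) (ha0 : ∀ᵐ x ∂μ, a0min ≤ a0 x)
    (hsum : ∀ x, Summable fun m => |b m x|)
    (hτt : ∀ᵐ x ∂μ, (∑' m, |b m x|) ≤ τt * a0 x)
    (hτtr : ∀ᵐ x ∂μ, (∑ m ∈ Finset.range r, |b m x|) ≤ τtr * a0 x)
    (hτt1 : τt < 1) (hτtr0 : 0 ≤ τtr) (hτtrτ : τtr ≤ τt)
    (W : Fin N → Ω × Γ → EuclideanSpace ℝ (Fin d))
    (A Pr : Matrix (Fin N) (Fin N) ℝ)
    (hA : ∀ t s, A t s =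
      ∫ z, p z.2 * ((a0 z.1 + ∑' m, b m z.1 * Y z.2 m) *
        (inner ℝ (W s z) (W t z) : ℝ)) ∂(μ.prod ν))
    (hPr : ∀ t s, Pr t s =
      ∫ z, p z.2 * ((a0 z.1 + ∑ m ∈ Finset.range r, b m z.1 * Y z.2 m) *
        (inner ℝ (W s z) (W t z) : ℝ)) ∂(μ.prod ν))
    (hIA : ∀ t s, Integrable
      (fun z => p z.2 * ((a0 z.1 + ∑' m, b m z.1 * Y z.2 m) *
        (inner ℝ (W s z) (W t z) : ℝ))) (μ.prod ν))
    (hIr : ∀ t s, Integrable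
      (fun z => p z.2 * ((a0 z.1 + ∑ m ∈ Finset.range r, b m z.1 * Y z.2 m) *
        (inner ℝ (W s z) (W t z) : ℝ))) (μ.prod ν))
    (hPrpd : Pr.PosDef) :
    (∀ y : ℕ → ℝ, (∀ m, |y m| ≤ 1) →
      ∀ᵐ x ∂μ,
        ((1 - τtr) / (1 + τt)) * (a0 x + ∑' m, b m x * y m) ≤
          a0 x + ∑ m ∈ Finset.range r, b m x * y m ∧
        a0 x + ∑ m ∈ Finset.range r, b m x * y m ≤
          ((1 + τtr) / (1 - τt)) * (a0 x + ∑' m, b m x * y m)) ∧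
    (∀ (lam : ℝ) (v : Fin N → ℝ), v ≠ 0 → A.mulVec v = lam • Pr.mulVec v →
      (1 - τt) / (1 + τtr) ≤ lam ∧ lam ≤ (1 + τt) / (1 - τtr)) :=
  alternative_assumption_bounds_general μ ν r p hp Y hY a0 b τt τtr hsum hτt hτtr hτt1 hτtr0 hτtrτ W
    A Pr hA hPr hIA hIr hPrpd
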